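/- For every τ ∈ {0,1}^ℕ, the set Y_τ is nonempty (equivalently, there exists a smooth bi-infinite sequence x over {1,3} with Types(x) = τ). -/

import Mathlib

open MeasureTheory Filter Topology
open scoped ENNReal

attribute [local instance] Classical.propDecidable

noncomputable section

/-- The shift map on bi-infinite sequences: `(S x) n = x (n+1)`. -/
def shift {α : Type*} (x : ℤ → α) : ℤ → α := fun n => x (n + 1)

/-- Shift by an arbitrary integer amount `m`. -/
def shiftZ {α : Type*} (m : ℤ) (x : ℤ → α) : ℤ → α := fun n => x (n + m)

/-- A run structure on a bi-infinite sequence `x`: `t k` is the starting index of the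
`k`-th maximal mono-symbol block of `x`, indexed so that block `0` contains position `0`. -/
structure RunStructure (x : ℤ → ℕ) where
  t : ℤ → ℤ
  mono : StrictMono t
  start_nonpos : t 0 ≤ 0
  start_pos : 0 < t 1
  const : ∀ k i : ℤ, t k ≤ i → i < t (k + 1) → x i = x (t k)
  alt : ∀ k : ℤ, x (t (k + 1)) ≠ x (t k)

/-- `d` is the run-length derivative of `x`: `d k` is the length of the `k`-th run. -/
def IsDelta (x d : ℤ → ℕ) : Prop :=
  ∃ r : RunStructure x, ∀ k : ℤ, (d k : ℤ) = r.t (k + 1) - r.t k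

/-- The run-length derivative operator `Δ` (junk value when no derivative exists). -/
def delta (x : ℤ → ℕ) : ℤ → ℕ :=
  if h : ∃ d, IsDelta x d then h.choose else fun _ => 0

/-- A bi-infinite sequence is smooth over `{1,3}` if all its iterated derivatives exist
and take values in `{1,3}`. -/
def SmoothSeq (x : ℤ → ℕ) : Prop :=
  ∀ k : ℕ, ∀ n : ℤ, delta^[k] x n = 1 ∨ delta^[k] x n = 3

/-- The set `X` of bi-infinite smooth sequences over `{1,3}`. -/
def SmoothX : Set (ℤ → ℕ) := {x | SmoothSeq x}

/-- The recoding alphabet: `A = 1`, `B = 3`, `C = 111`, `D = 333`. -/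
inductive ABCD : Type
  | A | B | C | D
deriving DecidableEq

instance : TopologicalSpace ABCD := ⊥
instance : DiscreteTopology ABCD := ⟨rfl⟩
instance : MeasurableSpace ABCD := ⊤

open ABCD

/-- The symbol (1 or 3) of the run encoded by a letter. -/
def sval : ABCD → ℕ
  | A => 1
  | B => 3
  | C => 1
  | D => 3

/-- The length (1 or 3) of the run encoded by a letter; this is also the value of `Δx`
at the corresponding position. -/
def lval : ABCD → ℕ
  | A => 1
  | B => 1
  | C => 3
  | D => 3

/-- `y` is the recoding of `x`: the letter `y k` encodes the `k`-th run of `x`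
(its symbol and its length). -/
def IsRecoding (x : ℤ → ℕ) (y : ℤ → ABCD) : Prop :=
  ∃ r : RunStructure x, ∀ k : ℤ,
    x (r.t k) = sval (y k) ∧ r.t (k + 1) - r.t k = (lval (y k) : ℤ)

/-- The recoding map `rec` (junk value when no recoding exists). -/
def recode (x : ℤ → ℕ) : ℤ → ABCD :=
  if h : ∃ y, IsRecoding x y then h.choose else fun _ => A

/-- The set `Y = rec(X)` of recodings of smooth sequences. -/
def SmoothY : Set (ℤ → ABCD) := recode '' SmoothX

/-- The derivative operator induced on recodings: since `(Δx) i = lval (rec x i)`,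
we have `Δ(rec x) = rec (Δ x) = recode (lval ∘ rec x)`. -/
def deltaY (y : ℤ → ABCD) : ℤ → ABCD := recode fun i => (lval (y i) : ℕ)

/-- `y` is well-aligned: the elementary block of `y` containing coordinate `0` starts
at position `0` (elementary blocks of `y` are exactly the runs of `Δx`, and
`(Δx) i = lval (y i)`). -/
def WellAligned (y : ℤ → ABCD) : Prop := lval (y (-1)) ≠ lval (y 0)

/-- `B_Y^L`: the set of `y ∈ Y` such that `y, Δy, ..., Δ^{L-1} y` are all well-aligned. -/
def BY (L : ℕ) : Set (ℤ → ABCD) :=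
  {y | y ∈ SmoothY ∧ ∀ l < L, WellAligned (deltaY^[l] y)}

/-- `Σ_y^L(n) = #{k ∈ [1,n] : S^k y ∈ B_Y^L}`. -/
def SigY (L : ℕ) (y : ℤ → ABCD) (n : ℕ) : ℕ :=
  ((Finset.Icc 1 n).filter fun k => shift^[k] y ∈ BY L).card

/-- `y` contains an elementary block in `{ABA, DCD}` (for `y ∈ Y`, any such factor is
automatically an elementary block). -/
def HasType0 (y : ℤ → ABCD) : Prop :=
  ∃ i : ℤ, (y i = A ∧ y (i + 1) = B ∧ y (i + 2) = A) ∨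
           (y i = D ∧ y (i + 1) = C ∧ y (i + 2) = D)

/-- `y` contains an elementary block in `{BAB, CDC}`. -/
def HasType1 (y : ℤ → ABCD) : Prop :=
  ∃ i : ℤ, (y i = B ∧ y (i + 1) = A ∧ y (i + 2) = B) ∨
           (y i = C ∧ y (i + 1) = D ∧ y (i + 2) = C)

/-- The type of a recoded sequence: `false` = type 0, `true` = type 1. -/
def typeOf (y : ℤ → ABCD) : Bool := decide (HasType1 y)

/-- The sequence of types of the successive derivatives of a smooth sequence `x`. -/
def TypesX (x : ℤ → ℕ) : ℕ → Bool := fun n => typeOf (recode (delta^[n] x))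

/-- The sequence of types of the successive derivatives of a recoded sequence `y`. -/
def TypesY (y : ℤ → ABCD) : ℕ → Bool := fun n => typeOf (deltaY^[n] y)

/-- `X_τ`: smooth bi-infinite sequences whose type sequence is exactly `τ`. -/
def Xset (τ : ℕ → Bool) : Set (ℤ → ℕ) := {x ∈ SmoothX | TypesX x = τ}

/-- `Y_τ = rec(X_τ)`. -/
def Yset (τ : ℕ → Bool) : Set (ℤ → ABCD) := recode '' Xset τ

/-- A sequence over `{A,B,C,D}` is alternating: no two consecutive symbols in `{A,C}`
and no two consecutive symbols in `{B,D}`. -/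
def Alternating (y : ℤ → ABCD) : Prop := ∀ n : ℤ, sval (y n) ≠ sval (y (n + 1))

/-- The substitutions `φ₀` and `φ₁` on letters. -/
def phiW : Bool → ABCD → List ABCD
  | false, A => [A]
  | false, B => [D]
  | false, C => [A, B, A]
  | false, D => [D, C, D]
  | true, A => [B]
  | true, B => [C]
  | true, C => [B, A, B]
  | true, D => [C, D, C]

/-- `z` is the image of the bi-infinite sequence `y` under the substitution `φ_t`, with
the convention that the image of the letter at position `0` starts at position `0`. -/
def IsSubst (t : Bool) (y z : ℤ → ABCD) : Prop :=
  ∃ u : ℤ → ℤ, u 0 = 0 ∧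
    (∀ k : ℤ, u (k + 1) = u k + (phiW t (y k)).length) ∧
    (∀ k : ℤ, ∀ j : Fin (phiW t (y k)).length, z (u k + (j : ℕ)) = (phiW t (y k)).get j)

/-- The substitution `φ_t` on bi-infinite sequences. -/
def substF (t : Bool) (y : ℤ → ABCD) : ℤ → ABCD :=
  if h : ∃ z, IsSubst t y z then h.choose else y

/-- The composition `φ_{τ₀} ∘ φ_{τ₁} ∘ ⋯ ∘ φ_{τ_{L-1}}`. -/
def substComp (τ : ℕ → Bool) : ℕ → (ℤ → ABCD) → (ℤ → ABCD)
  | 0 => id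
  | L + 1 => substF (τ 0) ∘ substComp (fun n => τ (n + 1)) L

/-- The homographies `h₀` and `h₁`. -/
def hmap : Bool → ℝ × ℝ → ℝ × ℝ
  | false, p => ((1 - p.1) / (3 - 2 * (p.1 + p.2)), (1 / 2 - p.1) / (3 - 2 * (p.1 + p.2)))
  | true, p => ((1 / 2 - p.1) / (3 - 2 * (p.1 + p.2)), (1 - p.1) / (3 - 2 * (p.1 + p.2)))

/-- The square `K = [0,1/2] × [0,1/2]`. -/
def Ksq : Set (ℝ × ℝ) := Set.Icc (0 : ℝ) (1 / 2) ×ˢ Set.Icc (0 : ℝ) (1 / 2)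

/-- The domain `E = {(a,b) ∈ K : a + b ≤ 3/4}`. -/
def Eset : Set (ℝ × ℝ) := {p ∈ Ksq | p.1 + p.2 ≤ 3 / 4}

/-- The composition `h_{t₀} ∘ h_{t₁} ∘ ⋯ ∘ h_{t_L}`. -/
def hComp (t : ℕ → Bool) : ℕ → (ℝ × ℝ → ℝ × ℝ)
  | 0 => hmap (t 0)
  | L + 1 => hComp t L ∘ hmap (t (L + 1))

/-- The point `(a(t), b(t))`, unique point of `⋂_L (h_{t₀} ∘ ⋯ ∘ h_{t_L})(E)`. -/
def abPoint (t : ℕ → Bool) : ℝ × ℝ :=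
  if h : ∃ p : ℝ × ℝ, (⋂ L : ℕ, hComp t L '' Eset) = {p} then h.choose else 0

/-- The number of occurrences of the letter `s` among positions `1, ..., m` of `z`. -/
def letterCount (s : ABCD) (z : ℤ → ABCD) (m : ℕ) : ℕ :=
  ((Finset.Icc 1 m).filter fun k => z (k : ℤ) = s).card

/-- `w` occurs as a factor of `y` at position `i`. -/
def IsFactorAt (w : List ABCD) (y : ℤ → ABCD) (i : ℤ) : Prop :=
  ∀ j : Fin w.length, y (i + (j : ℕ)) = w.get j

/-- The cylinder set `[w]` in `{1,3}^ℤ`. -/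
def cylX (w : List ℕ) : Set (ℤ → ℕ) :=
  {x | ∀ j : Fin w.length, x ((j : ℕ) : ℤ) = w.get j}

/-- The cylinder set `[w]` in `{A,B,C,D}^ℤ`. -/
def cylY (w : List ABCD) : Set (ℤ → ABCD) :=
  {y | ∀ j : Fin w.length, y ((j : ℕ) : ℤ) = w.get j}

/-- The number of occurrences of the finite word `w` in the prefix `x₀ ⋯ x_{n-1}`. -/
def occCount (x : ℤ → ℕ) (w : List ℕ) (n : ℕ) : ℕ :=
  ((Finset.range n).filter fun i =>
    i + w.length ≤ n ∧ ∀ j : Fin w.length, x (((i + (j : ℕ) : ℕ)) : ℤ) = w.get j).card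

/-- A subshift `Z` is minimal if it contains no nonempty proper closed shift-invariant
subset. -/
def ShiftMinimal {α : Type*} [TopologicalSpace α] (Z : Set (ℤ → α)) : Prop :=
  ∀ W : Set (ℤ → α), W ⊆ Z → W.Nonempty → IsClosed W → shift '' W = W → W = Z

/-!
The type sequence is realised by an `S`-adic sequence. If `y` is alternating (consecutive letters
have different symbols) and `z = φ_t(y)`, then every letter of `φ_t(c)` has length `sval c`, so the
runs of `lval ∘ z` are exactly the images of the letters of `y`: up to a shift,
`rec (lval ∘ z) = y` and `Δ (lval ∘ z) = lval ∘ y`. Moreover `φ₁` maps `C`, `D` to the type-1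
blocks `BAB`, `CDC`, while no image under `φ₀` contains one.

Since `D` occurs in both `φ₀(D) = DCD` and `φ₁(D) = CDC`, the words
`φ_{t_L} ∘ ⋯ ∘ φ_{t_{L+g-1}}(D)` are nested into each other through a chosen `D` and converge to
bi-infinite alternating sequences `z_L` with `z_L = φ_{t_L}(z_{L+1})`. For `t_{n+1} = τ n`, the
sequence `x = lval ∘ z_0` has `rec (Δⁿ x) = z_{n+1}` up to a shift, whose type is `τ n`.
-/

open Set

lemma StrictMono.add_sub_le {t : ℤ → ℤ} (ht : StrictMono t) {a b : ℤ} (hab : a ≤ b) :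
    t a + (b - a) ≤ t b := by
  induction b, hab using Int.leInduction with
  | base => simp
  | succ b _ ih => have := ht (lt_add_one b); omega

lemma StrictMono.exists_apply_le_lt {t : ℤ → ℤ} (ht : StrictMono t) (i : ℤ) :
    ∃ k, t k ≤ i ∧ i < t (k + 1) := by
  have bdd : ∃ b, ∀ k, t k ≤ i → k ≤ b := ⟨max 0 (i - t 0), fun k hk => by
    rcases le_or_gt k 0 with hk0 | hk0
    · exact hk0.trans (le_max_left _ _)
    · have := ht.add_sub_le hk0.le; omega⟩
  have nonempty : ∃ k, t k ≤ i := ⟨min 0 (i - t 0), by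
    have := ht.add_sub_le (min_le_left 0 (i - t 0)); omega⟩
  obtain ⟨k, hk, hmax⟩ := Int.exists_greatest_of_bdd bdd nonempty
  exact ⟨k, hk, not_le.1 fun h => by have := hmax _ h; omega⟩

lemma StrictMono.eq_of_range_eq {f g : ℤ → ℤ} (hf : StrictMono f) (hg : StrictMono g)
    (hfg : range f = range g) {a : ℤ} (ha : f a = g a) : f = g := by
  have up : ∀ {f g : ℤ → ℤ}, StrictMono g → range f ⊆ range g → StrictMono f →
      ∀ k, f k = g k → g (k + 1) ≤ f (k + 1) := by
    intro f g hg hsub hf k hk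
    obtain ⟨j, hj⟩ := hsub ⟨k + 1, rfl⟩
    have : k < j := hg.lt_iff_lt.1 (by rw [hj, ← hk]; exact hf (lt_add_one k))
    exact hj ▸ hg.monotone (by omega)
  have down : ∀ {f g : ℤ → ℤ}, StrictMono g → range f ⊆ range g → StrictMono f →
      ∀ k, f k = g k → f (k - 1) ≤ g (k - 1) := by
    intro f g hg hsub hf k hk
    obtain ⟨j, hj⟩ := hsub ⟨k - 1, rfl⟩
    have : j < k := hg.lt_iff_lt.1 (by rw [hj, ← hk]; exact hf (sub_one_lt k))
    exact hj ▸ hg.monotone (by omega)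
  funext n
  induction n using Int.inductionOn' (b := a) with
  | zero => exact ha
  | succ k _ ih => exact le_antisymm (up hf hfg.ge hg k ih.symm) (up hg hfg.le hf k ih)
  | pred k _ ih => exact le_antisymm (down hg hfg.le hf k ih) (down hf hfg.ge hg k ih.symm)

namespace RunStructure

variable {x : ℤ → ℕ}

lemma mem_range_t_iff (r : RunStructure x) (b : ℤ) : b ∈ range r.t ↔ x b ≠ x (b - 1) := by
  constructor
  · rintro ⟨k, rfl⟩
    have hprev := r.const (k - 1) (r.t k - 1) (by have := r.mono (sub_one_lt k); omega)
      (by rw [sub_add_cancel]; omega)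
    rw [hprev]
    simpa using r.alt (k - 1)
  · intro hb
    obtain ⟨k, hk, hk'⟩ := r.mono.exists_apply_le_lt b
    rcases hk.eq_or_lt with he | hlt
    · exact ⟨k, he⟩
    · exact absurd ((r.const k b hk hk').trans (r.const k (b - 1) (by omega) (by omega)).symm) hb

lemma t_eq (r r' : RunStructure x) : r.t = r'.t := by
  have hrange : range r.t = range r'.t := by
    ext b; rw [mem_range_t_iff, mem_range_t_iff]
  have first : ∀ s s' : RunStructure x, range s'.t ⊆ range s.t → s.t 1 ≤ s'.t 1 := by
    intro s s' hsub
    obtain ⟨j, hj⟩ := hsub ⟨1, rfl⟩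
    have : 0 < j := s.mono.lt_iff_lt.1 (by linarith [s.start_nonpos, s'.start_pos])
    exact hj ▸ s.mono.monotone (by omega)
  exact r.mono.eq_of_range_eq r'.mono hrange
    (le_antisymm (first r r' hrange.ge) (first r' r hrange.le))

end RunStructure

namespace ABCD

lemma ext_sval_lval {c c' : ABCD} (hs : sval c = sval c') (hl : lval c = lval c') :
    c = c' := by
  cases c <;> cases c' <;> simp_all [sval, lval]

lemma lval_eq_one_or_three (c : ABCD) : lval c = 1 ∨ lval c = 3 := by
  cases c <;> simp [lval]

lemma sval_eq_one_or_three (c : ABCD) : sval c = 1 ∨ sval c = 3 := by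
  cases c <;> simp [sval]

lemma exists_sval_eq_three {y : ℤ → ABCD} (hy : Alternating y) : ∃ k, sval (y k) = 3 := by
  have := hy 0
  rcases sval_eq_one_or_three (y 0) with h0 | h0
  · exact ⟨0 + 1, by have := sval_eq_one_or_three (y (0 + 1)); omega⟩
  · exact ⟨0, h0⟩

lemma length_phiW (t : Bool) (c : ABCD) : (phiW t c).length = lval c := by
  cases t <;> cases c <;> rfl

lemma lval_pos (c : ABCD) : 0 < lval c := by
  cases c <;> simp [lval]

lemma phiW_ne_nil (t : Bool) (c : ABCD) : phiW t c ≠ [] :=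
  List.ne_nil_of_length_pos (by rw [length_phiW]; exact lval_pos c)

lemma lval_of_mem_phiW {t : Bool} {c a : ABCD} (ha : a ∈ phiW t c) : lval a = sval c := by
  cases t <;> cases c <;> simp only [phiW, List.mem_cons, List.not_mem_nil, or_false] at ha <;>
    rcases ha with rfl | rfl | rfl <;> rfl

/-- Under `φ₀` the letters `B` and `C` only occur in the middle of `ABA` and `DCD`. -/
lemma phiW_false_getElem_eq_B_or_C {c : ABCD} {j : ℕ} (hj : j < (phiW false c).length)
    (h : (phiW false c)[j] = B ∨ (phiW false c)[j] = C) : j + 2 = lval c := by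
  cases c <;> simp only [phiW, List.length_cons, List.length_nil] at hj <;> interval_cases j <;>
    simp_all [phiW, lval]

lemma phiW_false_head (c : ABCD) (h : 0 < (phiW false c).length) :
    (phiW false c)[0] = A ∨ (phiW false c)[0] = D := by
  cases c <;> simp [phiW]

end ABCD

open ABCD

section RunLengthCoding

variable {x : ℤ → ℕ}

lemma IsDelta.delta_eq {d : ℤ → ℕ} (h : IsDelta x d) : delta x = d := by
  have hex : ∃ d, IsDelta x d := ⟨d, h⟩
  rw [delta, dif_pos hex]
  obtain ⟨r, hr⟩ := hex.choose_spec
  obtain ⟨r', hr'⟩ := h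
  funext k
  have := hr k
  have := hr' k
  rw [r.t_eq r'] at *
  omega

lemma IsRecoding.recode_eq {y : ℤ → ABCD} (h : IsRecoding x y) : recode x = y := by
  have hex : ∃ y, IsRecoding x y := ⟨y, h⟩
  rw [recode, dif_pos hex]
  obtain ⟨r, hr⟩ := hex.choose_spec
  obtain ⟨r', hr'⟩ := h
  funext k
  obtain ⟨hs, hl⟩ := hr k
  obtain ⟨hs', hl'⟩ := hr' k
  rw [r.t_eq r'] at hs hl
  exact ext_sval_lval (hs.symm.trans hs') (by omega)

lemma IsRecoding.isDelta {y : ℤ → ABCD} (h : IsRecoding x y) : IsDelta x (fun k => lval (y k)) :=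
  let ⟨r, hr⟩ := h
  ⟨r, fun k => (hr k).2.symm⟩

end RunLengthCoding

/-- `z` is the image of `y` under `φ_t`, the image of the letter `y k` starting at `u k`. -/
structure IsSubstAlong (t : Bool) (y z : ℤ → ABCD) (u : ℤ → ℤ) : Prop where
  cut_succ : ∀ k, u (k + 1) = u k + lval (y k)
  apply_cut_add : ∀ k (j : ℕ) (hj : j < (phiW t (y k)).length), z (u k + j) = (phiW t (y k))[j]

namespace IsSubstAlong

variable {t : Bool} {y z : ℤ → ABCD} {u : ℤ → ℤ}

lemma strictMono (h : IsSubstAlong t y z u) : StrictMono u :=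
  strictMono_int_of_lt_succ fun k => by
    have := h.cut_succ k; have := lval_pos (y k); omega

lemma shiftZ (h : IsSubstAlong t y z u) (m : ℤ) :
    IsSubstAlong t y (shiftZ m z) (fun k => u k - m) where
  cut_succ k := by rw [h.cut_succ]; ring
  apply_cut_add k j hj := by
    rw [← h.apply_cut_add k j hj, _root_.shiftZ, sub_add_eq_add_sub, sub_add_cancel]

lemma lval_apply (h : IsSubstAlong t y z u) {k i : ℤ} (hk : u k ≤ i) (hk' : i < u (k + 1)) :
    lval (z i) = sval (y k) := by
  have hj : (i - u k).toNat < (phiW t (y k)).length := by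
    have := h.cut_succ k; rw [length_phiW]; omega
  have hz := h.apply_cut_add k _ hj
  rw [Int.toNat_of_nonneg (by omega), add_sub_cancel] at hz
  exact hz ▸ lval_of_mem_phiW (List.getElem_mem hj)

lemma lval_apply_cut (h : IsSubstAlong t y z u) (k : ℤ) : lval (z (u k)) = sval (y k) :=
  h.lval_apply le_rfl (h.strictMono (lt_add_one k))

/-- The runs of `lval ∘ z` are the images of the letters of `y`. -/
lemma isRecoding (h : IsSubstAlong t y z u) (hy : Alternating y) :
    ∃ k₀, IsRecoding (fun i => lval (z i)) (_root_.shiftZ k₀ y) := by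
  obtain ⟨k₀, hk₀, hk₀'⟩ := h.strictMono.exists_apply_le_lt 0
  have hcut : ∀ k, u (k + 1 + k₀) = u (k + k₀ + 1) := fun k => by rw [add_right_comm]
  refine ⟨k₀, ⟨fun k => u (k + k₀), h.strictMono.comp (strictMono_id.add_const k₀), ?_, ?_,
    fun k i hi hi' => ?_, fun k => ?_⟩, fun k => ⟨?_, ?_⟩⟩
  · simpa using hk₀
  · simpa [add_comm] using hk₀'
  · rw [hcut] at hi'
    simp only [h.lval_apply hi hi', h.lval_apply_cut]
  · simp only [hcut, h.lval_apply_cut]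
    exact (hy (k + k₀)).symm
  · exact h.lval_apply_cut (k + k₀)
  · simp only [hcut, h.cut_succ, _root_.shiftZ]
    ring

lemma exists_lval_eq_three (h : IsSubstAlong t y z u) (hy : Alternating y) :
    ∃ i, lval (z i) = 3 := by
  obtain ⟨k, hk⟩ := exists_sval_eq_three hy
  exact ⟨u k, hk ▸ h.lval_apply_cut k⟩

/-- The image of a letter `C` or `D` under `φ₁` is one of the blocks `BAB`, `CDC`. -/
lemma hasType1_of_true (h : IsSubstAlong true y z u) (hy : ∃ k, lval (y k) = 3) :
    HasType1 z := by
  obtain ⟨k, hk⟩ := hy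
  have hlen : 2 < (phiW true (y k)).length := by rw [length_phiW, hk]; omega
  have h0 := h.apply_cut_add k 0 (by omega)
  have h1 := h.apply_cut_add k 1 (by omega)
  have h2 := h.apply_cut_add k 2 hlen
  push_cast at h0 h1 h2
  rw [add_zero] at h0
  refine ⟨u k, ?_⟩
  cases hyk : y k <;> simp [hyk, lval] at hk <;> simp [hyk, phiW, h0, h1, h2]

lemma apply_add_two_of_false (h : IsSubstAlong false y z u) {i : ℤ} (hi : z i = B ∨ z i = C) :
    z (i + 2) = A ∨ z (i + 2) = D := by
  obtain ⟨k, hk, hk'⟩ := h.strictMono.exists_apply_le_lt i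
  have hj : (i - u k).toNat < (phiW false (y k)).length := by
    have := h.cut_succ k; rw [length_phiW]; omega
  have hz := h.apply_cut_add k _ hj
  rw [Int.toNat_of_nonneg (by omega), add_sub_cancel] at hz
  have hnext : i + 2 = u (k + 1) := by
    have := phiW_false_getElem_eq_B_or_C hj (hz ▸ hi)
    have := h.cut_succ k
    omega
  have h0 := h.apply_cut_add (k + 1) 0 (by rw [length_phiW]; exact lval_pos _)
  rw [Nat.cast_zero, add_zero, ← hnext] at h0
  exact h0 ▸ phiW_false_head _ _

lemma not_hasType1_of_false (h : IsSubstAlong false y z u) : ¬ HasType1 z := by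
  rintro ⟨i, ⟨hB, -, hB'⟩ | ⟨hC, -, hC'⟩⟩
  · rcases h.apply_add_two_of_false (Or.inl hB) with h' | h' <;> simp [h'] at hB'
  · rcases h.apply_add_two_of_false (Or.inr hC) with h' | h' <;> simp [h'] at hC'

end IsSubstAlong

def substW (t : Bool) (w : List ABCD) : List ABCD := w.flatMap (phiW t)

section SubstWords

variable {t : Bool}

@[simp]
lemma substW_nil : substW t [] = [] := rfl

@[simp]
lemma substW_cons (c : ABCD) (w : List ABCD) : substW t (c :: w) = phiW t c ++ substW t w :=
  List.flatMap_cons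

@[simp]
lemma substW_append (w w' : List ABCD) : substW t (w ++ w') = substW t w ++ substW t w' :=
  List.flatMap_append

lemma substW_ne_nil {w : List ABCD} (hw : w ≠ []) : substW t w ≠ [] := by
  obtain ⟨c, w, rfl⟩ := List.exists_cons_of_ne_nil hw
  simp [phiW_ne_nil]

lemma isChain_substW {w : List ABCD} (hw : w.IsChain (sval · ≠ sval ·)) :
    (substW t w).IsChain (sval · ≠ sval ·) := by
  rw [substW, List.flatMap_def, List.isChain_flatten (by simp [phiW_ne_nil]), List.isChain_map]
  refine ⟨?_, hw.imp fun a b hab => ?_⟩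
  · simp only [List.mem_map]
    rintro _ ⟨c, -, rfl⟩
    cases t <;> cases c <;> simp [phiW, sval]
  · cases t <;> cases a <;> cases b <;> simp_all [phiW, sval]

lemma substW_eq_take_append {w : List ABCD} {m : ℕ} (hm : m < w.length) :
    substW t w = substW t (w.take m) ++ (phiW t w[m] ++ substW t (w.drop (m + 1))) := by
  rw [← substW_cons, ← substW_append, ← List.drop_eq_getElem_cons hm, List.take_append_drop]

lemma getD_substW {w : List ABCD} {m : ℕ} (hm : m < w.length) {j : ℕ}
    (hj : j < (phiW t w[m]).length) (d : ABCD) :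
    (substW t w).getD ((substW t (w.take m)).length + j) d = (phiW t w[m])[j] := by
  rw [substW_eq_take_append hm, List.getD_append_right _ _ _ _ (by omega), add_tsub_cancel_left,
    List.getD_append _ _ _ _ hj, List.getD_eq_getElem]

end SubstWords

section SubstIter

variable (tt : ℕ → Bool)

/-- `substIter tt L g = φ_{tt L} ∘ ⋯ ∘ φ_{tt (L + g - 1)}` on finite words. -/
def substIter : ℕ → ℕ → List ABCD → List ABCD
  | _, 0, w => w
  | L, g + 1, w => substW (tt L) (substIter (L + 1) g w)

variable {tt}

@[simp]
lemma substIter_append (L g : ℕ) (w w' : List ABCD) :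
    substIter tt L g (w ++ w') = substIter tt L g w ++ substIter tt L g w' := by
  induction g generalizing L with
  | zero => rfl
  | succ g ih => simp [substIter, ih]

lemma substIter_ne_nil (L g : ℕ) {w : List ABCD} (hw : w ≠ []) : substIter tt L g w ≠ [] := by
  induction g generalizing L with
  | zero => exact hw
  | succ g ih => exact substW_ne_nil (ih (L + 1))

lemma substIter_succ' (L g : ℕ) (w : List ABCD) :
    substIter tt L (g + 1) w = substIter tt L g (substW (tt (L + g)) w) := by
  induction g generalizing L with
  | zero => rfl
  | succ g ih =>
    rw [substIter, ih, Nat.add_right_comm]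
    rfl

lemma isChain_substIter (L g : ℕ) {w : List ABCD} (hw : w.IsChain (sval · ≠ sval ·)) :
    (substIter tt L g w).IsChain (sval · ≠ sval ·) := by
  induction g generalizing L with
  | zero => exact hw
  | succ g ih => exact isChain_substW (ih (L + 1))

end SubstIter

open Filter

lemma exists_le_of_frequently_lt {f : ℕ → ℕ} (hf : Monotone f)
    (hlt : ∀ g, ∃ g' ≥ g, f g' < f (g' + 1)) (k : ℕ) : ∃ g, k ≤ f g := by
  induction k with
  | zero => exact ⟨0, Nat.zero_le _⟩
  | succ k ih =>
    obtain ⟨g, hg⟩ := ih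
    obtain ⟨g', hg', hlt'⟩ := hlt g
    exact ⟨g' + 1, by have := hf hg'; omega⟩

lemma limUnder_atTop_eq_of_succ {β : Type*} [TopologicalSpace β] [T2Space β] [Nonempty β]
    {P : ℕ → Prop} {F : ℕ → β} (hP : ∀ g, P g → P (g + 1)) (hF : ∀ g, P g → F (g + 1) = F g)
    {g : ℕ} (hg : P g) : limUnder atTop F = F g := by
  have stable : ∀ g' ≥ g, P g' ∧ F g' = F g := by
    intro g' hg'
    induction g', hg' using Nat.le_induction with
    | base => exact ⟨hg, rfl⟩
    | succ g' _ ih => exact ⟨hP g' ih.1, (hF g' ih.1).trans ih.2⟩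
  exact (tendsto_nhds_of_eventually_eq
    (eventually_atTop.2 ⟨g, fun g' hg' => (stable g' hg').2⟩)).limUnder_eq

section NestedLimit

variable {α : Type*}

/-- `w g` sits inside `w (g + 1)` between `p g` and `s g`, and `a g` tracks the position of one
fixed letter of `w 0` inside `w g`. -/
structure IsNested (w p s : ℕ → List α) (a : ℕ → ℕ) : Prop where
  succ_eq : ∀ g, w (g + 1) = p g ++ w g ++ s g
  offset_succ : ∀ g, a (g + 1) = (p g).length + a g

def Covers (w : ℕ → List α) (a : ℕ → ℕ) (g : ℕ) (n : ℤ) : Prop :=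
  0 ≤ n + a g ∧ n + a g < (w g).length

lemma Covers.toNat_lt {w : ℕ → List α} {a : ℕ → ℕ} {g : ℕ} {n : ℤ} (h : Covers w a g n) :
    (n + a g).toNat < (w g).length := by
  obtain ⟨h₀, h₁⟩ := h; omega

lemma Covers.toNat_eq {w : ℕ → List α} {a : ℕ → ℕ} {g : ℕ} {n : ℤ} (h : Covers w a g n) :
    ((n + a g).toNat : ℤ) = n + a g :=
  Int.toNat_of_nonneg h.1

/-- `d` is a junk value, never read at positions covered by some `w g`. -/
def nestedLimit [TopologicalSpace α] [Nonempty α] (w : ℕ → List α) (a : ℕ → ℕ) (d : α)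
    (n : ℤ) : α :=
  limUnder atTop fun g => (w g).getD (n + a g).toNat d

namespace IsNested

variable {w p s : ℕ → List α} {a : ℕ → ℕ} (h : IsNested w p s a)
include h

lemma length_succ (g : ℕ) :
    (w (g + 1)).length = (p g).length + (w g).length + (s g).length := by
  rw [h.succ_eq g, List.length_append, List.length_append]

lemma covers_succ {g : ℕ} {n : ℤ} (hg : Covers w a g n) : Covers w a (g + 1) n := by
  have := h.length_succ g
  have := h.offset_succ g
  constructor <;> push_cast [Covers] at hg ⊢ <;> omega

lemma covers_mono {g g' : ℕ} {n : ℤ} (hg : Covers w a g n) (hle : g ≤ g') : Covers w a g' n := by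
  induction g', hle using Nat.le_induction with
  | base => exact hg
  | succ g' _ ih => exact h.covers_succ ih

lemma getD_succ {g : ℕ} {n : ℤ} (hg : Covers w a g n) (d : α) :
    (w (g + 1)).getD (n + a (g + 1)).toNat d = (w g).getD (n + a g).toNat d := by
  obtain ⟨hg₀, hg₁⟩ := hg
  have hidx : (n + a (g + 1)).toNat = (p g).length + (n + a g).toNat := by
    rw [h.offset_succ]; omega
  rw [h.succ_eq, hidx, List.append_assoc, List.getD_append_right _ _ _ _ (by omega),
    add_tsub_cancel_left, List.getD_append _ _ _ _ (by omega)]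

lemma nestedLimit_eq [TopologicalSpace α] [T2Space α] [Nonempty α] {g : ℕ} {n : ℤ}
    (hg : Covers w a g n) (d : α) : nestedLimit w a d n = (w g).getD (n + a g).toNat d :=
  limUnder_atTop_eq_of_succ (P := (Covers w a · n)) (fun _ => h.covers_succ)
    (fun _ hg' => h.getD_succ hg' d) hg

lemma offset_lt_length (h0 : a 0 < (w 0).length) (g : ℕ) : a g < (w g).length := by
  induction g with
  | zero => exact h0
  | succ g ih => rw [h.length_succ, h.offset_succ]; omega

lemma exists_covers (h0 : a 0 < (w 0).length) (hp : ∀ g, ∃ g' ≥ g, p g' ≠ [])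
    (hs : ∀ g, ∃ g' ≥ g, s g' ≠ []) (n : ℤ) : ∃ g, Covers w a g n := by
  have left_mono : Monotone a := monotone_nat_of_le_succ fun g => by rw [h.offset_succ]; omega
  have right_succ : ∀ g, (w (g + 1)).length - a (g + 1) = (w g).length - a g + (s g).length :=
    fun g => by have := h.offset_lt_length h0 g; rw [h.length_succ, h.offset_succ]; omega
  have right_mono : Monotone fun g => (w g).length - a g :=
    monotone_nat_of_le_succ fun g => by simp only [right_succ]; omega
  obtain ⟨g₁, hg₁⟩ := exists_le_of_frequently_lt left_mono (fun g => by
    obtain ⟨g', hg', hne⟩ := hp g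
    refine ⟨g', hg', ?_⟩
    rw [h.offset_succ]; have := List.length_pos_iff.2 hne; omega) n.natAbs
  obtain ⟨g₂, hg₂⟩ := exists_le_of_frequently_lt right_mono (fun g => by
    obtain ⟨g', hg', hne⟩ := hs g
    refine ⟨g', hg', ?_⟩
    simp only [right_succ]; have := List.length_pos_iff.2 hne; omega) (n.natAbs + 1)
  have h₁ := left_mono (le_max_left g₁ g₂)
  have h₂ := right_mono (le_max_right g₁ g₂)
  have := h.offset_lt_length h0 (max g₁ g₂)
  simp only at h₂
  exact ⟨max g₁ g₂, by omega, by omega⟩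

end IsNested

end NestedLimit

instance : Nonempty ABCD := ⟨A⟩

section SAdic

variable (tt : ℕ → Bool)

/-- For `φ₀(D) = DCD` the chosen `D` alternates with the parity of `L`, so that the nested words
built through these `D`s grow on both sides. -/
def seedPrefix (L : ℕ) : List ABCD := if tt L then [C] else if Even L then [] else [D, C]

def seedSuffix (L : ℕ) : List ABCD := if tt L then [C] else if Even L then [C, D] else []

lemma phiW_D_eq (L : ℕ) : phiW (tt L) D = seedPrefix tt L ++ D :: seedSuffix tt L := by
  unfold seedPrefix seedSuffix
  split_ifs with ht <;> simp [ht, phiW]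

lemma seedPrefix_ne_nil_or (M : ℕ) : seedPrefix tt M ≠ [] ∨ seedPrefix tt (M + 1) ≠ [] := by
  unfold seedPrefix
  have := Nat.even_add_one (n := M)
  split_ifs <;> simp_all

lemma seedSuffix_ne_nil_or (M : ℕ) : seedSuffix tt M ≠ [] ∨ seedSuffix tt (M + 1) ≠ [] := by
  unfold seedSuffix
  have := Nat.even_add_one (n := M)
  split_ifs <;> simp_all

def seedWord (L g : ℕ) : List ABCD := substIter tt L g [D]

def seedOffset (L : ℕ) : ℕ → ℕ
  | 0 => 0
  | g + 1 => (substIter tt L g (seedPrefix tt (L + g))).length + seedOffset L g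

lemma isNested_seedWord (L : ℕ) :
    IsNested (seedWord tt L) (fun g => substIter tt L g (seedPrefix tt (L + g)))
      (fun g => substIter tt L g (seedSuffix tt (L + g))) (seedOffset tt L) where
  succ_eq g := by
    rw [seedWord, substIter_succ', substW_cons, substW_nil, List.append_nil, phiW_D_eq,
      ← List.singleton_append, substIter_append, substIter_append, List.append_assoc]
    rfl
  offset_succ _ := rfl

lemma exists_covers_seedWord (L : ℕ) (n : ℤ) :
    ∃ g, Covers (seedWord tt L) (seedOffset tt L) g n := by
  have frequently : ∀ f : ℕ → List ABCD, (∀ M, f M ≠ [] ∨ f (M + 1) ≠ []) →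
      ∀ g, ∃ g' ≥ g, substIter tt L g' (f (L + g')) ≠ [] := by
    intro f hf g
    rcases hf (L + g) with h | h
    · exact ⟨g, le_rfl, substIter_ne_nil L g h⟩
    · exact ⟨g + 1, by omega, substIter_ne_nil L (g + 1) h⟩
  exact (isNested_seedWord tt L).exists_covers (by simp [seedWord, seedOffset, substIter])
    (frequently _ (seedPrefix_ne_nil_or tt)) (frequently _ (seedSuffix_ne_nil_or tt)) n

lemma exists_covers_seedWord_two (L : ℕ) (n n' : ℤ) :
    ∃ g, Covers (seedWord tt L) (seedOffset tt L) g n ∧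
      Covers (seedWord tt L) (seedOffset tt L) g n' := by
  obtain ⟨g, hg⟩ := exists_covers_seedWord tt L n
  obtain ⟨g', hg'⟩ := exists_covers_seedWord tt L n'
  exact ⟨max g g', (isNested_seedWord tt L).covers_mono hg (le_max_left g g'),
    (isNested_seedWord tt L).covers_mono hg' (le_max_right g g')⟩

def sadicSeq (L : ℕ) : ℤ → ABCD := nestedLimit (seedWord tt L) (seedOffset tt L) A

variable {tt}

lemma sadicSeq_eq {L g : ℕ} {n : ℤ} (hg : Covers (seedWord tt L) (seedOffset tt L) g n) :
    sadicSeq tt L n = (seedWord tt L g).getD (n + seedOffset tt L g).toNat A :=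
  (isNested_seedWord tt L).nestedLimit_eq hg A

lemma alternating_sadicSeq (L : ℕ) : Alternating (sadicSeq tt L) := by
  intro n
  obtain ⟨g, hg, hg'⟩ := exists_covers_seedWord_two tt L n (n + 1)
  have hidx : (n + 1 + seedOffset tt L g).toNat = (n + seedOffset tt L g).toNat + 1 := by
    have := hg.toNat_eq; omega
  have hlt := hidx ▸ hg'.toNat_lt
  rw [sadicSeq_eq hg, sadicSeq_eq hg', hidx, List.getD_eq_getElem _ _ hg.toNat_lt,
    List.getD_eq_getElem _ _ hlt]
  exact List.isChain_iff_getElem.1 (isChain_substIter L g (List.isChain_singleton D)) _ hlt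

variable (tt)

/-- Position in `sadicSeq tt L` of the image of the letter `k` of `sadicSeq tt (L + 1)`, as read
off from the words at stage `g`. -/
def sadicCutAt (L g : ℕ) (k : ℤ) : ℤ :=
  (substW (tt L) ((seedWord tt (L + 1) g).take (k + seedOffset tt (L + 1) g).toNat)).length -
    seedOffset tt L (g + 1)

def sadicCut (L : ℕ) (k : ℤ) : ℤ := limUnder atTop fun g => sadicCutAt tt L g k

variable {tt}

lemma sadicCutAt_succ {L g : ℕ} {k : ℤ}
    (hk : Covers (seedWord tt (L + 1)) (seedOffset tt (L + 1)) g k) :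
    sadicCutAt tt L (g + 1) k = sadicCutAt tt L g k := by
  have hN := isNested_seedWord tt (L + 1)
  set p := substIter tt (L + 1) g (seedPrefix tt (L + 1 + g))
  have hidx : (k + seedOffset tt (L + 1) (g + 1)).toNat
      = p.length + (k + seedOffset tt (L + 1) g).toNat := by
    have hoff : seedOffset tt (L + 1) (g + 1) = p.length + seedOffset tt (L + 1) g := rfl
    have := hk.toNat_eq
    rw [hoff]; omega
  have htake : (seedWord tt (L + 1) (g + 1)).take (k + seedOffset tt (L + 1) (g + 1)).toNat
      = p ++ (seedWord tt (L + 1) g).take (k + seedOffset tt (L + 1) g).toNat := by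
    rw [hN.succ_eq, hidx, List.append_assoc, List.take_length_add_append,
      List.take_append_of_le_length hk.toNat_lt.le]
  have hoff : seedOffset tt L (g + 1 + 1) = (substW (tt L) p).length + seedOffset tt L (g + 1) := by
    rw [seedOffset, show L + (g + 1) = L + 1 + g by omega]; rfl
  rw [sadicCutAt, sadicCutAt, htake, substW_append, List.length_append, hoff]
  push_cast
  ring

lemma sadicCut_eq {L g : ℕ} {k : ℤ}
    (hk : Covers (seedWord tt (L + 1)) (seedOffset tt (L + 1)) g k) :
    sadicCut tt L k = sadicCutAt tt L g k :=
  limUnder_atTop_eq_of_succ (P := (Covers (seedWord tt (L + 1)) (seedOffset tt (L + 1)) · k))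
    (fun _ => (isNested_seedWord tt (L + 1)).covers_succ) (fun _ => sadicCutAt_succ) hk

lemma isSubstAlong_sadicSeq (L : ℕ) :
    IsSubstAlong (tt L) (sadicSeq tt (L + 1)) (sadicSeq tt L) (sadicCut tt L) where
  cut_succ k := by
    obtain ⟨g, hk, hk'⟩ := exists_covers_seedWord_two tt (L + 1) k (k + 1)
    set w := seedWord tt (L + 1) g
    have hm : (k + seedOffset tt (L + 1) g).toNat < w.length := hk.toNat_lt
    have hidx : (k + 1 + seedOffset tt (L + 1) g).toNat
        = (k + seedOffset tt (L + 1) g).toNat + 1 := by have := hk.toNat_eq; omega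
    rw [sadicCut_eq hk, sadicCut_eq hk', sadicCutAt, sadicCutAt, hidx, List.take_add_one,
      List.getElem?_eq_getElem hm, sadicSeq_eq hk, List.getD_eq_getElem _ _ hm]
    simp [length_phiW]
    ring
  apply_cut_add k j hj := by
    obtain ⟨g, hk⟩ := exists_covers_seedWord tt (L + 1) k
    set w := seedWord tt (L + 1) g
    set m := (k + seedOffset tt (L + 1) g).toNat
    have hm : m < w.length := hk.toNat_lt
    have hwm : w[m] = sadicSeq tt (L + 1) k := by rw [sadicSeq_eq hk, List.getD_eq_getElem _ _ hm]
    have hj' : j < (phiW (tt L) w[m]).length := hwm ▸ hj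
    have hcut : sadicCut tt L k
        = (substW (tt L) (w.take m)).length - seedOffset tt L (g + 1) := sadicCut_eq hk
    have hw : seedWord tt L (g + 1) = substW (tt L) w := rfl
    have hlen : (substW (tt L) (w.take m)).length + (phiW (tt L) w[m]).length ≤
        (substW (tt L) w).length := by
      rw [substW_eq_take_append hm]; simp
    have hidx : (sadicCut tt L k + j + seedOffset tt L (g + 1)).toNat
        = (substW (tt L) (w.take m)).length + j := by
      rw [hcut]; omega
    have hcov : Covers (seedWord tt L) (seedOffset tt L) (g + 1) (sadicCut tt L k + j) := by
      rw [Covers, hw, hcut]; omega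
    rw [sadicSeq_eq hcov, hidx, hw, getD_substW hm hj']
    simp only [hwm]

lemma typeOf_sadicSeq (L : ℕ) : typeOf (sadicSeq tt L) = tt L := by
  have h := isSubstAlong_sadicSeq (tt := tt) L
  cases htt : tt L <;> rw [htt] at h <;>
    simp only [typeOf, decide_eq_true_eq, decide_eq_false_iff_not]
  · exact h.not_hasType1_of_false
  · exact h.hasType1_of_true
      ((isSubstAlong_sadicSeq (L + 1)).exists_lval_eq_three (alternating_sadicSeq (L + 2)))

end SAdic

lemma hasType1_shiftZ (m : ℤ) (y : ℤ → ABCD) : HasType1 (shiftZ m y) ↔ HasType1 y := by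
  constructor
  · rintro ⟨i, h⟩
    exact ⟨i + m, by simpa only [shiftZ, add_right_comm] using h⟩
  · rintro ⟨i, h⟩
    exact ⟨i - m, by simpa only [shiftZ, add_right_comm, sub_add_cancel] using h⟩

lemma typeOf_shiftZ (m : ℤ) (y : ℤ → ABCD) : typeOf (shiftZ m y) = typeOf y := by
  simp only [typeOf, hasType1_shiftZ]

lemma exists_isRecoding_sadicSeq (tt : ℕ → Bool) (L : ℕ) (m : ℤ) :
    ∃ k, IsRecoding (fun i => lval (shiftZ m (sadicSeq tt L) i))
      (shiftZ k (sadicSeq tt (L + 1))) :=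
  ((isSubstAlong_sadicSeq L).shiftZ m).isRecoding (alternating_sadicSeq (L + 1))

lemma exists_iterate_delta_sadicSeq (tt : ℕ → Bool) (n : ℕ) :
    ∃ m, delta^[n] (fun i => lval (sadicSeq tt 0 i))
      = fun i => lval (shiftZ m (sadicSeq tt n) i) := by
  induction n with
  | zero => exact ⟨0, by simp [shiftZ]⟩
  | succ n ih =>
    obtain ⟨m, hm⟩ := ih
    obtain ⟨k, hk⟩ := exists_isRecoding_sadicSeq tt n m
    exact ⟨k, by rw [Function.iterate_succ_apply', hm, hk.isDelta.delta_eq]⟩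

/-- Nonemptiness of `Y_τ`.
For every `τ ∈ {0,1}^ℕ`, the set `Y_τ` is nonempty. -/
theorem stmt7 (τ : ℕ → Bool) : (Yset τ).Nonempty := by
  let tt : ℕ → Bool := fun n => τ (n - 1)
  let x : ℤ → ℕ := fun i => lval (sadicSeq tt 0 i)
  refine ⟨recode x, x, ⟨fun n i => ?_, funext fun n => ?_⟩, rfl⟩
  · obtain ⟨m, hm⟩ := exists_iterate_delta_sadicSeq tt n
    rw [hm]
    exact lval_eq_one_or_three _
  · obtain ⟨m, hm⟩ := exists_iterate_delta_sadicSeq tt n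
    obtain ⟨k, hk⟩ := exists_isRecoding_sadicSeq tt n m
    rw [TypesX, hm, hk.recode_eq, typeOf_shiftZ, typeOf_sadicSeq]
    simp [tt]
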